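/- arXiv:2512.14619 — 2 statements merged into one kernel-verified Lean document; each statement's English description precedes it below -/
import Mathlib

section
/- Let A be an n×n row-stochastic matrix, and suppose c = ‖A‖₁ > 1 (maximum column sum). Define B = ((c-1)/2)·I − (1/c)·A. Then ‖B‖₁ ≤ (c+1)/2 < c = ‖A‖₁. -/
/-! The column-sum norm of `A` is the `ℓ∞` operator norm of `Aᵀ`, so it is subadditive and
absolutely homogeneous with `‖1‖₁ = 1`. Hence `‖B‖₁ ≤ (c - 1) / 2 + (1 / c) · c = (c + 1) / 2`,
which is `< c` exactly when `c > 1`. -/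

open Finset

/-- The matrix 1-norm: maximum absolute column sum. -/
noncomputable def matrixOneNorm {n : ℕ} [NeZero n] (A : Matrix (Fin n) (Fin n) ℝ) : ℝ :=
  Finset.univ.sup' Finset.univ_nonempty (fun j => ∑ i, |A i j|)

open Matrix

attribute [local instance] Matrix.linftyOpNormedAddCommGroup Matrix.linftyOpNormedSpace

theorem matrixOneNorm_eq_norm_transpose {n : ℕ} [NeZero n] (A : Matrix (Fin n) (Fin n) ℝ) :
    matrixOneNorm A = ‖Aᵀ‖ := by
  rw [linfty_opNorm_def, ← sup'_eq_sup univ_nonempty,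
    apply_sup'_eq_sup'_comp _ _ NNReal.coe_max]
  simp [matrixOneNorm, Real.norm_eq_abs, Function.comp_def]

theorem matrixOneNorm_smul_one_sub_smul_le {n : ℕ} [NeZero n] (a b : ℝ)
    (A : Matrix (Fin n) (Fin n) ℝ) :
    matrixOneNorm (a • (1 : Matrix (Fin n) (Fin n) ℝ) - b • A) ≤ |a| + |b| * matrixOneNorm A := by
  rw [matrixOneNorm_eq_norm_transpose, matrixOneNorm_eq_norm_transpose, transpose_sub,
    transpose_smul, transpose_smul, transpose_one]
  calc ‖a • (1 : Matrix (Fin n) (Fin n) ℝ) - b • Aᵀ‖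
      ≤ ‖a • (1 : Matrix (Fin n) (Fin n) ℝ)‖ + ‖b • Aᵀ‖ := norm_sub_le _ _
    _ = |a| + |b| * ‖Aᵀ‖ := by simp only [norm_smul, norm_one, mul_one, Real.norm_eq_abs]

theorem gpa_one_norm_lt_general (n : ℕ) [NeZero n]
    (A : Matrix (Fin n) (Fin n) ℝ)
    (c : ℝ) (hc : c = matrixOneNorm A) (hc1 : 1 < c)
    (B : Matrix (Fin n) (Fin n) ℝ)
    (hB : B = ((c - 1) / 2) • (1 : Matrix (Fin n) (Fin n) ℝ) - (1 / c) • A) :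
    matrixOneNorm B ≤ (c + 1) / 2 ∧ (c + 1) / 2 < c := by
  have hc0 : 0 < c := by linarith
  refine ⟨?_, by linarith⟩
  calc matrixOneNorm B ≤ |(c - 1) / 2| + |1 / c| * matrixOneNorm A :=
        hB ▸ matrixOneNorm_smul_one_sub_smul_le _ _ A
    _ = (c - 1) / 2 + 1 / c * c := by
        rw [← hc, abs_of_nonneg (by linarith), abs_of_pos (by positivity)]
    _ = (c + 1) / 2 := by field_simp; ring

/-- If A is row-stochastic with 1-norm c > 1, then the matrix
B = ((c-1)/2)·I − (1/c)·A satisfies ‖B‖₁ ≤ (c+1)/2 < c = ‖A‖₁. -/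
theorem gpa_one_norm_lt (n : ℕ) [NeZero n]
    (A : Matrix (Fin n) (Fin n) ℝ)
    (hnonneg : ∀ i j, 0 ≤ A i j) (hrow : ∀ i, ∑ j, A i j = 1)
    (c : ℝ) (hc : c = matrixOneNorm A) (hc1 : 1 < c)
    (B : Matrix (Fin n) (Fin n) ℝ)
    (hB : B = ((c - 1) / 2) • (1 : Matrix (Fin n) (Fin n) ℝ) - (1 / c) • A) :
    matrixOneNorm B ≤ (c + 1) / 2 ∧ (c + 1) / 2 < c :=
  gpa_one_norm_lt_general n A c hc hc1 B hB
end

section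
/- Let Q̂, K̂ ∈ ℝ^{n×d}, V ∈ ℝ^{n×d}, and scalars γ₀,…,γ_K. Define Z by the recursion Z₀ = γ₀V, M₀ = K̂ᵀV, Z_k = Z_{k−1} + γ_k Q̂ M_{k−1}, M_k = (K̂ᵀQ̂) M_{k−1}. Then Z_K = Σ_{k=0}^K γ_k (Q̂K̂ᵀ)^k V. -/
/-! The cached `d × d` matrices are `M k = (K̂ᵀQ̂)^k K̂ᵀV`, and pushing `Q̂` through the power,
`Q̂ (K̂ᵀQ̂)^k = (Q̂K̂ᵀ)^k Q̂`, gives `Q̂ M k = (Q̂K̂ᵀ)^(k+1) V`; so each step of the recursion for `Z`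
adds the next term of the series, which therefore telescopes to the partial sum. -/

theorem eq_pow_mul_of_forall_succ_eq_mul {M : Type*} [Monoid M] {x : ℕ → M} {a : M}
    (h : ∀ k, x (k + 1) = a * x k) (k : ℕ) : x k = a ^ k * x 0 := by
  induction k with
  | zero => rw [pow_zero, one_mul]
  | succ k ih => rw [h, ih, pow_succ', mul_assoc]

theorem Finset.eq_sum_range_of_forall_succ_eq_add {M : Type*} [AddCommMonoid M] {Z f : ℕ → M}
    (h0 : Z 0 = f 0) (h : ∀ k, Z (k + 1) = Z k + f (k + 1)) (K : ℕ) :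
    Z K = ∑ k ∈ Finset.range (K + 1), f k := by
  induction K with
  | zero => rw [zero_add, Finset.sum_range_one, h0]
  | succ K ih => rw [h, ih, Finset.sum_range_succ _ (K + 1)]

namespace Matrix

variable {m n α : Type*} [Fintype m] [Fintype n] [DecidableEq m] [DecidableEq n] [Semiring α]

theorem mul_mul_pow (A : Matrix m n α) (B : Matrix n m α) (k : ℕ) :
    A * (B * A) ^ k = (A * B) ^ k * A := by
  induction k with
  | zero => rw [pow_zero, pow_zero, Matrix.mul_one, Matrix.one_mul]
  | succ k ih =>
    rw [pow_succ, ← Matrix.mul_assoc, ih, pow_succ]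
    simp only [Matrix.mul_assoc]

theorem mul_pow_mul_mul (A : Matrix m n α) (B : Matrix n m α) {p : Type*} (C : Matrix m p α)
    (k : ℕ) : A * ((B * A) ^ k * (B * C)) = (A * B) ^ (k + 1) * C := by
  rw [← Matrix.mul_assoc, mul_mul_pow, pow_succ]
  simp only [Matrix.mul_assoc]

end Matrix

/-- Correctness of the scalable GPA forward pass: the recursion
Z₀ = γ₀V, M₀ = K̂ᵀV, Z_{k+1} = Z_k + γ_{k+1} Q̂ M_k, M_{k+1} = (K̂ᵀQ̂) M_k
satisfies Z_K = Σ_{k=0}^K γ_k (Q̂K̂ᵀ)^k V. -/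
theorem scalable_gpa_algorithm_correct (n d : ℕ) (Kmax : ℕ)
    (Q Khat V : Matrix (Fin n) (Fin d) ℝ) (γ : ℕ → ℝ)
    (Z : ℕ → Matrix (Fin n) (Fin d) ℝ)
    (M : ℕ → Matrix (Fin d) (Fin d) ℝ)
    (hZ0 : Z 0 = γ 0 • V)
    (hM0 : M 0 = Khat.transpose * V)
    (hZ : ∀ k : ℕ, Z (k + 1) = Z k + γ (k + 1) • (Q * M k))
    (hM : ∀ k : ℕ, M (k + 1) = (Khat.transpose * Q) * M k) :
    Z Kmax = ∑ k ∈ Finset.range (Kmax + 1), γ k • ((Q * Khat.transpose) ^ k * V) := by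
  have hQM (k : ℕ) : Q * M k = (Q * Khat.transpose) ^ (k + 1) * V := by
    rw [eq_pow_mul_of_forall_succ_eq_mul hM, hM0, Matrix.mul_pow_mul_mul]
  refine Finset.eq_sum_range_of_forall_succ_eq_add ?_ (fun k => ?_) Kmax
  · rw [hZ0, pow_zero, Matrix.one_mul]
  · rw [hZ, hQM]
end
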